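/- arXiv:1003.4396 — 6 statements merged into one kernel-verified Lean document; each statement's English description precedes it below -/
import Mathlib

section
/- Let V be a real vector space, F : V → V linear with F(F x) = −x, let g and T be symmetric hybrid bilinear forms on V, and let S be a trilinear form on V symmetric and hybrid in its first two arguments. Suppose there are linear functionals ρ, σ : V → ℝ such that the condition Ω₂* holds: S(x,y,z) − S(x,z,y) = ρ(z)T(x,y) − ρ(y)T(x,z) + σ(z)g(x,y) − σ(y)g(x,z) for all x, y, z ∈ V. Then S(x,y,z) − S(F x, z, F y) = ρ(z)T(x,y) − ρ(F y)T(F x, z) + σ(z)g(x,y) − σ(F y)g(F x, z) for all x, y, z ∈ V. (Equation (13) in the proof of Theorem 1.) -/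
theorem equation_thirteen_general
    {V : Type*} [AddCommGroup V] [Module ℝ V]
    (F : V →ₗ[ℝ] V)
    (g T : V →ₗ[ℝ] V →ₗ[ℝ] ℝ)
    (hghybrid : ∀ x y : V, g (F x) (F y) = g x y)
    (hThybrid : ∀ x y : V, T (F x) (F y) = T x y)
    (S : V →ₗ[ℝ] V →ₗ[ℝ] V →ₗ[ℝ] ℝ)
    (hShybrid : ∀ x y z : V, S (F x) (F y) z = S x y z)
    (ρ σ : V →ₗ[ℝ] ℝ)
    (hΩ2 : ∀ x y z : V, S x y z - S x z y =
      ρ z * T x y - ρ y * T x z + σ z * g x y - σ y * g x z) :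
    ∀ x y z : V, S x y z - S (F x) z (F y) =
      ρ z * T x y - ρ (F y) * T (F x) z + σ z * g x y - σ (F y) * g (F x) z := fun x y z => by
  simpa only [hShybrid, hThybrid, hghybrid] using hΩ2 (F x) (F y) z

/-- Equation (13) in the proof of Theorem 1. -/
theorem equation_thirteen
    {V : Type*} [AddCommGroup V] [Module ℝ V]
    (F : V →ₗ[ℝ] V) (hF : ∀ x : V, F (F x) = -x)
    (g T : V →ₗ[ℝ] V →ₗ[ℝ] ℝ)
    (hgsymm : ∀ x y : V, g x y = g y x)
    (hghybrid : ∀ x y : V, g (F x) (F y) = g x y)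
    (hTsymm : ∀ x y : V, T x y = T y x)
    (hThybrid : ∀ x y : V, T (F x) (F y) = T x y)
    (S : V →ₗ[ℝ] V →ₗ[ℝ] V →ₗ[ℝ] ℝ)
    (hSsymm : ∀ x y z : V, S x y z = S y x z)
    (hShybrid : ∀ x y z : V, S (F x) (F y) z = S x y z)
    (ρ σ : V →ₗ[ℝ] ℝ)
    (hΩ2 : ∀ x y z : V, S x y z - S x z y =
      ρ z * T x y - ρ y * T x z + σ z * g x y - σ y * g x z) :
    ∀ x y z : V, S x y z - S (F x) z (F y) =
      ρ z * T x y - ρ (F y) * T (F x) z + σ z * g x y - σ (F y) * g (F x) z :=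
  equation_thirteen_general F g T hghybrid hThybrid S hShybrid ρ σ hΩ2
end

section
/- Let V be a real vector space, F : V → V linear with F(F x) = −x, let g and T be symmetric hybrid bilinear forms on V, and let S be a trilinear form on V symmetric and hybrid in its first two arguments. Suppose there are linear functionals ρ, σ : V → ℝ such that S(x,y,z) − S(x,z,y) = ρ(z)T(x,y) − ρ(y)T(x,z) + σ(z)g(x,y) − σ(y)g(x,z) for all x, y, z ∈ V. Then the symmetrized identity holds: S(x,y,z) + S(y,z,x) = ρ(z)T(x,y) + ρ(x)T(y,z) + σ(z)g(x,y) + σ(x)g(y,z) for all x, y, z ∈ V. (Equation (14) in the proof of Theorem 1, with the sign of the last term corrected.) -/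
/-!
Put `B x y z := ρ z * T x y + σ z * g x y` and `D := S - B`. Like `S`, the form `B` is symmetric
and hybrid in its first two arguments, and the hypothesis says exactly that `D` is symmetric in
its last two, so `D` is totally symmetric and hybrid. Hybridity with `F ∘ F = -1` means that `F`
changes sign when moved between the first two slots; by total symmetry it then does so between
any two slots, and moving it around all three slots gives `D (F x) y z = -D (F x) y z`. Hence
`D = 0`, i.e. `S = B`, and the identity is `B x y z + B y z x`.
-/

namespace LinearMap

variable {R V M : Type*} [CommRing R] [AddCommGroup V] [Module R V] [AddCommGroup M] [Module R M]
  {F : V →ₗ[R] V}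

theorem apply_map_apply_eq_neg_of_hybrid (hF : ∀ x, F (F x) = -x) {D : V →ₗ[R] V →ₗ[R] V →ₗ[R] M}
    (hD : ∀ x y z, D (F x) (F y) z = D x y z) (x y z : V) :
    D (F x) y z = -D x (F y) z := by
  rw [← hD, hF, map_neg, neg_apply, neg_apply]

theorem eq_zero_of_symm_of_hybrid [IsAddTorsionFree M] (hF : ∀ x, F (F x) = -x)
    {D : V →ₗ[R] V →ₗ[R] V →ₗ[R] M} (h₁₂ : ∀ x y z, D x y z = D y x z)
    (h₂₃ : ∀ x y z, D x y z = D x z y) (hD : ∀ x y z, D (F x) (F y) z = D x y z) :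
    D = 0 := by
  have swap₁₂ := apply_map_apply_eq_neg_of_hybrid hF hD
  have swap₃₁ : ∀ x y z, D x y (F z) = -D (F x) y z := fun x y z ↦ by
    rw [h₂₃ x y (F z), h₂₃ (F x) y z, swap₁₂ x z y, neg_neg]
  have hF₁ : ∀ x y z, D (F x) y z = 0 := fun x y z ↦ by
    have swap₃₂ : D x y (F z) = -D x (F y) z := by
      rw [h₁₂ x y (F z), swap₃₁ y x z, h₁₂ (F y) x z]
    rw [← self_eq_neg]
    calc D (F x) y z = -D x (F y) z := swap₁₂ x y z
      _ = -D (F x) y z := swap₃₂.symm.trans (swap₃₁ x y z)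
  ext x y z
  simpa [hF] using hF₁ (F x) y z

theorem eq_of_symm_of_hybrid_of_skew_eq [IsAddTorsionFree M] (hF : ∀ x, F (F x) = -x)
    {S B : V →ₗ[R] V →ₗ[R] V →ₗ[R] M}
    (hS₁₂ : ∀ x y z, S x y z = S y x z) (hB₁₂ : ∀ x y z, B x y z = B y x z)
    (hS : ∀ x y z, S (F x) (F y) z = S x y z) (hB : ∀ x y z, B (F x) (F y) z = B x y z)
    (hskew : ∀ x y z, S x y z - S x z y = B x y z - B x z y) :
    S = B := by
  refine sub_eq_zero.mp (eq_zero_of_symm_of_hybrid hF (fun x y z ↦ ?_) (fun x y z ↦ ?_)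
    (fun x y z ↦ ?_)) <;> simp only [sub_apply]
  · rw [hS₁₂, hB₁₂]
  · rw [sub_eq_sub_iff_sub_eq_sub, hskew]
  · rw [hS, hB]

end LinearMap

/-- Equation (14) in the proof of Theorem 1 (with the sign of the last term
corrected). -/
theorem equation_fourteen
    {V : Type*} [AddCommGroup V] [Module ℝ V]
    (F : V →ₗ[ℝ] V) (hF : ∀ x : V, F (F x) = -x)
    (g T : V →ₗ[ℝ] V →ₗ[ℝ] ℝ)
    (hgsymm : ∀ x y : V, g x y = g y x)
    (hghybrid : ∀ x y : V, g (F x) (F y) = g x y)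
    (hTsymm : ∀ x y : V, T x y = T y x)
    (hThybrid : ∀ x y : V, T (F x) (F y) = T x y)
    (S : V →ₗ[ℝ] V →ₗ[ℝ] V →ₗ[ℝ] ℝ)
    (hSsymm : ∀ x y z : V, S x y z = S y x z)
    (hShybrid : ∀ x y z : V, S (F x) (F y) z = S x y z)
    (ρ σ : V →ₗ[ℝ] ℝ)
    (hΩ2 : ∀ x y z : V, S x y z - S x z y =
      ρ z * T x y - ρ y * T x z + σ z * g x y - σ y * g x z) :
    ∀ x y z : V, S x y z + S y z x =
      ρ z * T x y + ρ x * T y z + σ z * g x y + σ x * g y z := by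
  set B : V →ₗ[ℝ] V →ₗ[ℝ] V →ₗ[ℝ] ℝ :=
    T.compr₂ ((LinearMap.lsmul ℝ (V →ₗ[ℝ] ℝ)).flip ρ) +
      g.compr₂ ((LinearMap.lsmul ℝ (V →ₗ[ℝ] ℝ)).flip σ)
  have hB : ∀ x y z, B x y z = ρ z * T x y + σ z * g x y := fun x y z ↦ by
    simp [B, mul_comm]
  have hSB : S = B := by
    refine LinearMap.eq_of_symm_of_hybrid_of_skew_eq hF hSsymm (fun x y z ↦ ?_) hShybrid
      (fun x y z ↦ ?_) (fun x y z ↦ ?_) <;> simp only [hB]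
    · rw [hTsymm, hgsymm]
    · rw [hThybrid, hghybrid]
    · linear_combination hΩ2 x y z
  intro x y z
  rw [hSB, hB, hB]
  ring
end

section
/- (Theorem 1, case Ω₂*.) Let V be a real vector space, F : V → V linear with F(F x) = −x, let g and T be symmetric hybrid bilinear forms on V, and let S be a trilinear form on V symmetric and hybrid in its first two arguments. If there are linear functionals ρ, σ : V → ℝ such that the condition Ω₂* holds, namely S(x,y,z) − S(x,z,y) = ρ(z)T(x,y) − ρ(y)T(x,z) + σ(z)g(x,y) − σ(y)g(x,z) for all x, y, z ∈ V, then S(x,y,z) = ρ(z)T(x,y) + σ(z)g(x,y) for all x, y, z ∈ V. (In the Kähler space this says T_{ij,k} = ρ_k T_{ij} + σ_k g_{ij}.) -/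
/-!
Put `A(x,y,z) = S(x,y,z) - ρ(z)T(x,y) - σ(z)g(x,y)`. Symmetry of `S`, `T`, `g` makes `A` symmetric
in its first two arguments, and Ω₂* says exactly that `A` is symmetric in its last two, so `A` is
totally symmetric. A totally symmetric form that is odd and hybrid in a pair of arguments vanishes:
moving `F` around by symmetry and applying `F² = -1` once gives `A(x,y,z) = -A(x,y,z)`.
-/

theorem eq_zero_of_symm_of_odd_of_hybrid {M N : Type*} [Neg M] [AddCommGroup N]
    [IsAddTorsionFree N] (F : M → M) (hF : ∀ x, F (F x) = -x) (A : M → M → M → N)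
    (h₁₂ : ∀ x y z, A x y z = A y x z) (h₂₃ : ∀ x y z, A x y z = A x z y)
    (hodd : ∀ x y z, A (-x) y z = -A x y z) (hA : ∀ x y z, A (F x) (F y) z = A x y z)
    (x y z : M) : A x y z = 0 := by
  have h₁₃ : ∀ x y z, A x y z = A y z x := fun x y z => by rw [h₁₂, h₂₃]
  refine self_eq_neg.mp ?_
  calc A x y z = A (F x) (F y) z := (hA x y z).symm
    _ = A (F y) z (F x) := h₁₃ _ _ _
    _ = A (F (F y)) (F z) (F x) := (hA _ _ _).symm
    _ = -A y (F z) (F x) := by rw [hF, hodd]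
    _ = -A (F z) (F x) y := by rw [h₁₃]
    _ = -A (F (F z)) (F (F x)) y := by rw [hA (F z) (F x)]
    _ = -A x y z := by rw [hF, hF, hodd, h₁₂, hodd, neg_neg, h₂₃]

/-- Theorem 1, case Ω₂*: in a Kähler space, condition Ω₂* forces
`T_{ij,k} = ρ_k T_{ij} + σ_k g_{ij}`. -/
theorem theorem_one_omega_two_star
    {V : Type*} [AddCommGroup V] [Module ℝ V]
    (F : V →ₗ[ℝ] V) (hF : ∀ x : V, F (F x) = -x)
    (g T : V →ₗ[ℝ] V →ₗ[ℝ] ℝ)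
    (hgsymm : ∀ x y : V, g x y = g y x)
    (hghybrid : ∀ x y : V, g (F x) (F y) = g x y)
    (hTsymm : ∀ x y : V, T x y = T y x)
    (hThybrid : ∀ x y : V, T (F x) (F y) = T x y)
    (S : V →ₗ[ℝ] V →ₗ[ℝ] V →ₗ[ℝ] ℝ)
    (hSsymm : ∀ x y z : V, S x y z = S y x z)
    (hShybrid : ∀ x y z : V, S (F x) (F y) z = S x y z)
    (ρ σ : V →ₗ[ℝ] ℝ)
    (hΩ2 : ∀ x y z : V, S x y z - S x z y =
      ρ z * T x y - ρ y * T x z + σ z * g x y - σ y * g x z) :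
    ∀ x y z : V, S x y z = ρ z * T x y + σ z * g x y := by
  intro x y z
  have hA : S x y z - ρ z * T x y - σ z * g x y = 0 := by
    refine eq_zero_of_symm_of_odd_of_hybrid F hF
      (fun x y z => S x y z - ρ z * T x y - σ z * g x y) ?_ ?_ ?_ ?_ x y z
    · intro x y z; simp only [hSsymm x y, hTsymm x y, hgsymm x y]
    · intro x y z; linarith [hΩ2 x y z]
    · intro x y z; simp only [map_neg, LinearMap.neg_apply]; ring
    · intro x y z; simp only [hShybrid, hThybrid, hghybrid]
  linarith
end

section
/- (Theorem 1, case Ω₃*.) Let V be a real vector space, F : V → V linear with F(F x) = −x, let g and T be symmetric hybrid bilinear forms on V, and let S be a trilinear form on V symmetric and hybrid in its first two arguments. If there are linear functionals φ, γ, η, χ : V → ℝ such that the condition Ω₃* holds, namely S(x,y,z) = φ(z)T(x,y) + γ(x)T(y,z) + γ(y)T(z,x) + η(z)g(x,y) + χ(x)g(y,z) + χ(y)g(z,x) for all x, y, z ∈ V, then S(x,y,z) = (φ−γ)(z)·T(x,y) + (η−χ)(z)·g(x,y) for all x, y, z ∈ V. -/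
/-!
Writing `Q(x,y,z) = γ(x)T(y,z) + γ(y)T(z,x) + γ(z)T(x,y) + χ(x)g(y,z) + χ(y)g(z,x) + χ(z)g(x,y)`,
condition Ω₃* reads `S(x,y,z) = (φ-γ)(z)T(x,y) + (η-χ)(z)g(x,y) + Q(x,y,z)`. Since `S`, `T` and
`g` are hybrid, so is `Q` in its first two arguments, and `Q` is invariant under cyclic
permutations, hence hybrid in every pair of arguments. Then
`Q(x,y,z) = Q(Fx,Fy,z) = Q(F²x,Fy,Fz) = -Q(x,Fy,Fz) = -Q(x,y,z)`, so `Q = 0`.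
-/

section Hybrid

variable {V M : Type*} [Neg V] [AddGroup M] [IsAddTorsionFree M]

theorem eq_zero_of_cycle_invariant_of_hybrid (F : V → V) (Q : V → V → V → M)
    (hF : ∀ x, F (F x) = -x) (hneg : ∀ x y z, Q (-x) y z = -Q x y z)
    (hcycle : ∀ x y z, Q x y z = Q y z x) (hhybrid : ∀ x y z, Q (F x) (F y) z = Q x y z)
    (x y z : V) : Q x y z = 0 := by
  have hybrid₁₃ : ∀ a b c, Q (F a) b (F c) = Q a b c := fun a b c => by
    rw [← hcycle, hhybrid, hcycle]
  have hybrid₂₃ : ∀ a b c, Q a (F b) (F c) = Q a b c := fun a b c => by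
    rw [hcycle, hhybrid, ← hcycle]
  refine self_eq_neg.mp ?_
  calc Q x y z = Q (F x) (F y) z := (hhybrid x y z).symm
    _ = Q (F (F x)) (F y) (F z) := (hybrid₁₃ _ _ _).symm
    _ = -Q x y z := by rw [hF, hneg, hybrid₂₃]

end Hybrid

section CyclicSum

variable {R V : Type*} [CommRing R] [AddCommGroup V] [Module R V]

def cyclicSum (γ : V →ₗ[R] R) (T : V →ₗ[R] V →ₗ[R] R) (x y z : V) : R :=
  γ x * T y z + γ y * T z x + γ z * T x y

variable (γ : V →ₗ[R] R) (T : V →ₗ[R] V →ₗ[R] R)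

theorem cyclicSum_cycle (x y z : V) : cyclicSum γ T x y z = cyclicSum γ T y z x := by
  unfold cyclicSum
  ring

theorem cyclicSum_neg_left (x y z : V) : cyclicSum γ T (-x) y z = -cyclicSum γ T x y z := by
  simp only [cyclicSum, map_neg, LinearMap.neg_apply]
  ring

end CyclicSum

theorem theorem_one_omega_three_star_general
    {V : Type*} [AddCommGroup V] [Module ℝ V]
    (F : V →ₗ[ℝ] V) (hF : ∀ x : V, F (F x) = -x)
    (g T : V →ₗ[ℝ] V →ₗ[ℝ] ℝ)
    (hghybrid : ∀ x y : V, g (F x) (F y) = g x y)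
    (hThybrid : ∀ x y : V, T (F x) (F y) = T x y)
    (S : V →ₗ[ℝ] V →ₗ[ℝ] V →ₗ[ℝ] ℝ)
    (hShybrid : ∀ x y z : V, S (F x) (F y) z = S x y z)
    (φ γ η χ : V →ₗ[ℝ] ℝ)
    (hΩ3 : ∀ x y z : V, S x y z =
      φ z * T x y + γ x * T y z + γ y * T z x +
      η z * g x y + χ x * g y z + χ y * g z x) :
    ∀ x y z : V, S x y z = (φ z - γ z) * T x y + (η z - χ z) * g x y := by
  set Q : V → V → V → ℝ := fun x y z => cyclicSum γ T x y z + cyclicSum χ g x y z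
  have hS : ∀ x y z, S x y z = (φ z - γ z) * T x y + (η z - χ z) * g x y + Q x y z := by
    intro x y z
    simp only [Q, cyclicSum, hΩ3]
    ring
  have hQ : ∀ x y z, Q x y z = 0 := by
    refine eq_zero_of_cycle_invariant_of_hybrid F Q hF ?_ ?_ ?_
    · intro x y z
      simp only [Q, cyclicSum_neg_left, neg_add]
    · intro x y z
      simp only [Q, cyclicSum_cycle γ T x, cyclicSum_cycle χ g x]
    · intro x y z
      have h := hS (F x) (F y) z
      rw [hShybrid, hThybrid, hghybrid, hS x y z] at h
      linarith
  intro x y z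
  rw [hS, hQ, add_zero]

/-- Theorem 1, case Ω₃*: in a Kähler space, condition Ω₃* forces
`T_{ij,k} = (φ-γ)_k T_{ij} + (η-χ)_k g_{ij}`. -/
theorem theorem_one_omega_three_star
    {V : Type*} [AddCommGroup V] [Module ℝ V]
    (F : V →ₗ[ℝ] V) (hF : ∀ x : V, F (F x) = -x)
    (g T : V →ₗ[ℝ] V →ₗ[ℝ] ℝ)
    (hgsymm : ∀ x y : V, g x y = g y x)
    (hghybrid : ∀ x y : V, g (F x) (F y) = g x y)
    (hTsymm : ∀ x y : V, T x y = T y x)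
    (hThybrid : ∀ x y : V, T (F x) (F y) = T x y)
    (S : V →ₗ[ℝ] V →ₗ[ℝ] V →ₗ[ℝ] ℝ)
    (hSsymm : ∀ x y z : V, S x y z = S y x z)
    (hShybrid : ∀ x y z : V, S (F x) (F y) z = S x y z)
    (φ γ η χ : V →ₗ[ℝ] ℝ)
    (hΩ3 : ∀ x y z : V, S x y z =
      φ z * T x y + γ x * T y z + γ y * T z x +
      η z * g x y + χ x * g y z + χ y * g z x) :
    ∀ x y z : V, S x y z = (φ z - γ z) * T x y + (η z - χ z) * g x y :=
  theorem_one_omega_three_star_general F hF g T hghybrid hThybrid S hShybrid φ γ η χ hΩ3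
end

section
/- (Theorem 2, case Ω₃.) Let V be a finite-dimensional real vector space, F : V → V linear with F(F x) = −x, let g be a nondegenerate symmetric hybrid bilinear form on V, T a symmetric hybrid bilinear form on V, and S a trilinear form on V symmetric and hybrid in its first two arguments. Assume S satisfies condition Ω₃: there are linear functionals a, b : V → ℝ with S(x,y,z) = a(z)g(x,y) + b(x)g(y,z) + b(y)g(x,z) for all x, y, z ∈ V. Assume moreover the divergence-free condition coming from the Bianchi identity, T_{αi,β} g^{βα} = 0, expressed as follows: for every y ∈ V, the endomorphism M_y : V → V determined by g(M_y x, z) = S(x, y, z) for all x, z ∈ V has trace zero. Then a = 0, b = 0 and S = 0 (the energy-momentum tensor is covariantly constant, T_{ij,k} = 0). -/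
/-!
Hybridity of `S` in its first two arguments, read through `Ω₃` and the nondegeneracy of `g`,
says `b (F x) • F x = b x • x`. Applying `F` and combining the two identities gives
`(b x ^ 2 + b (F x) ^ 2) • x = 0`, so `b = 0`. Then `M_y x = g x y • w`, where `g w = a`,
and its trace is `g w y = a y`, so the Bianchi identity forces `a = 0`.
-/

open LinearMap

theorem exists_eq_of_separatingLeft {K V : Type*} [Field K] [AddCommGroup V] [Module K V]
    [FiniteDimensional K V] (g : V →ₗ[K] V →ₗ[K] K)
    (hg : ∀ x : V, (∀ y : V, g x y = 0) → x = 0) (a : Module.Dual K V) :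
    ∃ w : V, g w = a := by
  have hinj : Function.Injective g :=
    (injective_iff_map_eq_zero g).mpr fun x hx => hg x fun y => by simp [hx]
  exact (injective_iff_surjective_of_finrank_eq_finrank
    Subspace.dual_finrank_eq.symm).mp hinj a

theorem eq_zero_of_forall_smul_map_eq {K V : Type*} [Field K] [LinearOrder K]
    [IsStrictOrderedRing K] [AddCommGroup V] [Module K V]
    (F : V →ₗ[K] V) (hF : ∀ x : V, F (F x) = -x) (b : Module.Dual K V)
    (hb : ∀ x : V, b (F x) • F x = b x • x) : b = 0 := by
  refine LinearMap.ext fun x => ?_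
  have hFx : b x • F x = -(b (F x) • x) := by
    simpa [hF] using (congrArg F (hb x)).symm
  have hsq : (b x ^ 2 + b (F x) ^ 2) • x = 0 := by
    have h := congrArg (b x • ·) (hb x)
    simp only [smul_comm (b x) (b (F x)), hFx, smul_neg] at h
    linear_combination (norm := module) -h
  rcases smul_eq_zero.mp hsq with h | rfl
  · exact pow_eq_zero_iff two_ne_zero |>.mp
      ((add_eq_zero_iff_of_nonneg (sq_nonneg _) (sq_nonneg _)).mp h).1
  · exact map_zero b

section OmegaThree

variable {V : Type*} [AddCommGroup V] [Module ℝ V] (g : V →ₗ[ℝ] V →ₗ[ℝ] ℝ)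
  (S : V →ₗ[ℝ] V →ₗ[ℝ] V →ₗ[ℝ] ℝ) (a b : Module.Dual ℝ V)

theorem smul_map_eq_of_omegaThree (F : V →ₗ[ℝ] V)
    (hghybrid : ∀ x y : V, g (F x) (F y) = g x y)
    (hgnd : ∀ x : V, (∀ y : V, g x y = 0) → x = 0)
    (hShybrid : ∀ x y z : V, S (F x) (F y) z = S x y z)
    (hΩ3 : ∀ x y z : V, S x y z = a z * g x y + b x * g y z + b y * g x z) (x : V) :
    b (F x) • F x = b x • x := by
  refine sub_eq_zero.mp (hgnd _ fun z => ?_)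
  have h := hShybrid x x z
  rw [hΩ3, hΩ3, hghybrid] at h
  simp only [map_sub, map_smul, LinearMap.sub_apply, LinearMap.smul_apply, smul_eq_mul]
  linarith

theorem eq_zero_of_trace_eq_zero [FiniteDimensional ℝ V]
    (hgnd : ∀ x : V, (∀ y : V, g x y = 0) → x = 0)
    (htrace : ∀ (y : V) (M : V →ₗ[ℝ] V),
      (∀ x z : V, g (M x) z = a z * g x y) → trace ℝ V M = 0) :
    a = 0 := by
  obtain ⟨w, hw⟩ := exists_eq_of_separatingLeft g hgnd a
  ext y
  have hM : ∀ x z : V, g ((g.flip y).smulRight w x) z = a z * g x y := fun x z => by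
    simp [hw, mul_comm]
  simpa [hw] using htrace y _ hM

end OmegaThree

theorem theorem_two_omega_three_general
    {V : Type*} [AddCommGroup V] [Module ℝ V] [FiniteDimensional ℝ V]
    (F : V →ₗ[ℝ] V) (hF : ∀ x : V, F (F x) = -x)
    (g : V →ₗ[ℝ] V →ₗ[ℝ] ℝ)
    (hghybrid : ∀ x y : V, g (F x) (F y) = g x y)
    (hgnd : ∀ x : V, (∀ y : V, g x y = 0) → x = 0)
    (S : V →ₗ[ℝ] V →ₗ[ℝ] V →ₗ[ℝ] ℝ)
    (hShybrid : ∀ x y z : V, S (F x) (F y) z = S x y z)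
    (a b : V →ₗ[ℝ] ℝ)
    (hΩ3 : ∀ x y z : V, S x y z = a z * g x y + b x * g y z + b y * g x z)
    (htrace : ∀ (y : V) (M : V →ₗ[ℝ] V),
      (∀ x z : V, g (M x) z = S x y z) → LinearMap.trace ℝ V M = 0) :
    a = 0 ∧ b = 0 ∧ S = 0 := by
  have hb : b = 0 := eq_zero_of_forall_smul_map_eq F hF b
    (smul_map_eq_of_omegaThree g S a b F hghybrid hgnd hShybrid hΩ3)
  have ha : a = 0 := eq_zero_of_trace_eq_zero g a hgnd fun y M hM =>
    htrace y M fun x z => by simp [hM, hΩ3, hb]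
  refine ⟨ha, hb, ?_⟩
  ext x y z
  simp [hΩ3, ha, hb]

/-- Theorem 2, case Ω₃: in a Kähler space, condition Ω₃ together with the
contracted Bianchi identity (traces of the endomorphisms `M_y` vanish) forces
`a = 0`, `b = 0` and `S = 0`. -/
theorem theorem_two_omega_three
    {V : Type*} [AddCommGroup V] [Module ℝ V] [FiniteDimensional ℝ V]
    (F : V →ₗ[ℝ] V) (hF : ∀ x : V, F (F x) = -x)
    (g T : V →ₗ[ℝ] V →ₗ[ℝ] ℝ)
    (hgsymm : ∀ x y : V, g x y = g y x)
    (hghybrid : ∀ x y : V, g (F x) (F y) = g x y)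
    (hgnd : ∀ x : V, (∀ y : V, g x y = 0) → x = 0)
    (hTsymm : ∀ x y : V, T x y = T y x)
    (hThybrid : ∀ x y : V, T (F x) (F y) = T x y)
    (S : V →ₗ[ℝ] V →ₗ[ℝ] V →ₗ[ℝ] ℝ)
    (hSsymm : ∀ x y z : V, S x y z = S y x z)
    (hShybrid : ∀ x y z : V, S (F x) (F y) z = S x y z)
    (a b : V →ₗ[ℝ] ℝ)
    (hΩ3 : ∀ x y z : V, S x y z = a z * g x y + b x * g y z + b y * g x z)
    (htrace : ∀ (y : V) (M : V →ₗ[ℝ] V),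
      (∀ x z : V, g (M x) z = S x y z) → LinearMap.trace ℝ V M = 0) :
    a = 0 ∧ b = 0 ∧ S = 0 :=
  theorem_two_omega_three_general F hF g hghybrid hgnd S hShybrid a b hΩ3 htrace
end

section
/- (Theorem 3: every Kähler space of class Ω₄* belongs to Ω₅*.) Let V be a real vector space, F : V → V linear with F(F x) = −x, let g and T be symmetric hybrid bilinear forms on V, and let S be a trilinear form on V symmetric and hybrid in its first two arguments. Suppose there are linear functionals ρ, σ : V → ℝ such that the condition Ω₄* holds: S(x,y,z) − S(x,z,y) = ρ(z)T(x,y) − ρ(y)T(x,z) + σ(z)g(x,y) − σ(y)g(x,z) + ρ(F z)T(x, F y) − ρ(F y)T(x, F z) + σ(F z)g(x, F y) − σ(F y)g(x, F z) for all x, y, z ∈ V. Then there exist linear functionals φ, γ, η, χ : V → ℝ such that S satisfies condition Ω₅*: S(x,y,z) = φ(z)T(x,y) + γ(x)T(y,z) + γ(y)T(z,x) + η(z)g(x,y) + χ(x)g(y,z) + χ(y)g(z,x) + γ(F x)T(F y, z) + γ(F y)T(z, F x) + χ(F x)g(F y, z) + χ(F y)g(F x, z) for all x, y, z ∈ V.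 -/
/-! Complexify and split `V = V¹'⁰ ⊕ V⁰'¹`. Hybridity of `S` in its first two arguments means that
`S(x, y, z)` vanishes unless `x` and `y` have opposite types; then `z` has the type of `x` or of
`y`, and in either case one of the two terms of `S(x, y, z) - S(x, z, y)` (resp. with `x, y`
swapped) vanishes. So `S` is recovered from its antisymmetrisation in the last two arguments, which
is prescribed by `Ω₄*`. Carrying this out for the right-hand side of `Ω₄*` gives
`S(x, y, z) = 2 ρ(z) T(x, y) + 2 σ(z) g(x, y)`, an instance of `Ω₅*` with `γ = χ = 0`. -/

section Hybrid

variable {R M N : Type*} [CommRing R] [AddCommGroup M] [Module R M] [AddCommGroup N] [Module R N]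
  {F : M →ₗ[R] M}

theorem apply_map_left_of_hybrid (hF : ∀ x, F (F x) = -x) {B : M →ₗ[R] M →ₗ[R] N}
    (hB : ∀ x y, B (F x) (F y) = B x y) (x y : M) : B (F x) y = -B x (F y) := by
  rw [← hB, hF, map_neg, LinearMap.neg_apply]

/-- `A(x,y,z) - A(Fx,y,Fz)` and `A(y,x,z) - A(Fy,x,Fz)` are twice the parts of `S(x,y,z)`
anti-hybrid in `(x, z)` and in `(y, z)`, and these two parts add up to `S(x,y,z)`. -/
theorem two_smul_apply_eq_of_sub_swap_eq (hF : ∀ x, F (F x) = -x)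
    {S : M →ₗ[R] M →ₗ[R] M →ₗ[R] N} (hSsymm : ∀ x y z, S x y z = S y x z)
    (hShybrid : ∀ x y z, S (F x) (F y) z = S x y z) {A : M → M → M → N}
    (hA : ∀ x y z, S x y z - S x z y = A x y z) (x y z : M) :
    (2 : R) • S x y z = (A x y z - A (F x) y (F z)) + (A y x z - A (F y) x (F z)) := by
  have hS : ∀ x y, S (F x) (F y) = S x y := fun x y => LinearMap.ext (hShybrid x y)
  have hFx : S (F x) y (F z) = -S x (F y) (F z) := by
    rw [apply_map_left_of_hybrid hF hS, LinearMap.neg_apply]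
  simp only [← hA, hShybrid, hSsymm y x, hSsymm (F y) x, hFx]
  rw [two_smul]
  abel

end Hybrid

section OmegaFour

variable {R M : Type*} [CommRing R] [AddCommGroup M] [Module R M] {F : M →ₗ[R] M}

/-- The contribution of a pair `(ρ, T)` to the right-hand side of `Ω₄*`. -/
def omegaFourTerm (F : M →ₗ[R] M) (ρ : M →ₗ[R] R) (T : M →ₗ[R] M →ₗ[R] R) (x y z : M) : R :=
  ρ z * T x y - ρ y * T x z + ρ (F z) * T x (F y) - ρ (F y) * T x (F z)

theorem omegaFourTerm_sub_map (hF : ∀ x, F (F x) = -x) (ρ : M →ₗ[R] R)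
    {T : M →ₗ[R] M →ₗ[R] R} (hT : ∀ x y, T (F x) (F y) = T x y) (x y z : M) :
    omegaFourTerm F ρ T x y z - omegaFourTerm F ρ T (F x) y (F z) =
      2 * (ρ z * T x y + ρ (F z) * T x (F y)) := by
  simp only [omegaFourTerm, hF, hT, map_neg, apply_map_left_of_hybrid hF hT]
  ring

theorem omegaFourTerm_sub_map_add_swap (hF : ∀ x, F (F x) = -x) (ρ : M →ₗ[R] R)
    {T : M →ₗ[R] M →ₗ[R] R} (hTsymm : ∀ x y, T x y = T y x)
    (hT : ∀ x y, T (F x) (F y) = T x y) (x y z : M) :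
    (omegaFourTerm F ρ T x y z - omegaFourTerm F ρ T (F x) y (F z)) +
      (omegaFourTerm F ρ T y x z - omegaFourTerm F ρ T (F y) x (F z)) = 4 * (ρ z * T x y) := by
  have hFx : T y (F x) = -T x (F y) := by rw [hTsymm, apply_map_left_of_hybrid hF hT]
  rw [omegaFourTerm_sub_map hF ρ hT, omegaFourTerm_sub_map hF ρ hT, hFx, hTsymm y x]
  ring

end OmegaFour

/-- Theorem 3: every Kähler space of class Ω₄* belongs to Ω₅*. -/
theorem omega_four_star_subset_omega_five_star
    {V : Type*} [AddCommGroup V] [Module ℝ V]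
    (F : V →ₗ[ℝ] V) (hF : ∀ x : V, F (F x) = -x)
    (g T : V →ₗ[ℝ] V →ₗ[ℝ] ℝ)
    (hgsymm : ∀ x y : V, g x y = g y x)
    (hghybrid : ∀ x y : V, g (F x) (F y) = g x y)
    (hTsymm : ∀ x y : V, T x y = T y x)
    (hThybrid : ∀ x y : V, T (F x) (F y) = T x y)
    (S : V →ₗ[ℝ] V →ₗ[ℝ] V →ₗ[ℝ] ℝ)
    (hSsymm : ∀ x y z : V, S x y z = S y x z)
    (hShybrid : ∀ x y z : V, S (F x) (F y) z = S x y z)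
    (ρ σ : V →ₗ[ℝ] ℝ)
    (hΩ4 : ∀ x y z : V, S x y z - S x z y =
      ρ z * T x y - ρ y * T x z + σ z * g x y - σ y * g x z +
      ρ (F z) * T x (F y) - ρ (F y) * T x (F z) +
      σ (F z) * g x (F y) - σ (F y) * g x (F z)) :
    ∃ φ γ η χ : V →ₗ[ℝ] ℝ, ∀ x y z : V, S x y z =
      φ z * T x y + γ x * T y z + γ y * T z x +
      η z * g x y + χ x * g y z + χ y * g z x +
      γ (F x) * T (F y) z + γ (F y) * T z (F x) +
      χ (F x) * g (F y) z + χ (F y) * g (F x) z := by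
  have hA : ∀ x y z, S x y z - S x z y =
      omegaFourTerm F ρ T x y z + omegaFourTerm F σ g x y z := by
    intro x y z
    rw [hΩ4, omegaFourTerm, omegaFourTerm]
    ring
  refine ⟨(2 : ℝ) • ρ, 0, (2 : ℝ) • σ, 0, fun x y z => ?_⟩
  have hS := two_smul_apply_eq_of_sub_swap_eq hF hSsymm hShybrid hA x y z
  have hρ := omegaFourTerm_sub_map_add_swap hF ρ hTsymm hThybrid x y z
  have hσ := omegaFourTerm_sub_map_add_swap hF σ hgsymm hghybrid x y z
  simp only [smul_eq_mul, LinearMap.smul_apply, LinearMap.zero_apply] at hS ⊢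
  linarith
end
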